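/- arXiv:2404.06291 — 3 statements merged into one kernel-verified Lean document; each statement's English description precedes it below -/
import Mathlib

section
/- Let a ≤ b be real numbers and let ξ_L, ξ_U : ℝ → ℝ be continuous on [a,b] and antitone on [a,b], satisfying ξ_L(v) ≤ ξ_U(v) for every v ∈ [a,b], and mapping [a,b] into [a,b] (i.e. ξ_L(v) ∈ [a,b] and ξ_U(v) ∈ [a,b] for all v ∈ [a,b]). Then there exist p, q ∈ [a,b] with p ≤ q, ξ_U(p) = q, and ξ_L(q) = p; that is, the pair of lower and upper bound maps admits a 2-cycle alternating between ξ_U and ξ_L. -/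
/-- Existence of a 2-cycle of the pair of lower/upper bound auxiliary maps:
continuous antitone self-maps `ξ_L ≤ ξ_U` of `[a,b]` admit `p ≤ q` with
`ξ_U p = q` and `ξ_L q = p`. -/
theorem stmt5 (a b : ℝ) (hab : a ≤ b) (ξL ξU : ℝ → ℝ)
    (hLc : ContinuousOn ξL (Set.Icc a b)) (hUc : ContinuousOn ξU (Set.Icc a b))
    (hLa : AntitoneOn ξL (Set.Icc a b)) (hUa : AntitoneOn ξU (Set.Icc a b))
    (hLU : ∀ v ∈ Set.Icc a b, ξL v ≤ ξU v)
    (hLmap : ∀ v ∈ Set.Icc a b, ξL v ∈ Set.Icc a b)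
    (hUmap : ∀ v ∈ Set.Icc a b, ξU v ∈ Set.Icc a b) :
    ∃ p q : ℝ, p ∈ Set.Icc a b ∧ q ∈ Set.Icc a b ∧ p ≤ q ∧
      ξU p = q ∧ ξL q = p := by
  have hmemab : a ∈ Set.Icc a b := ⟨le_refl a, hab⟩
  have hmembb : b ∈ Set.Icc a b := ⟨hab, le_refl b⟩
  -- f v = ξU v - v is continuous and antitone on [a,b]
  set f : ℝ → ℝ := fun v => ξU v - v with hf
  have hfc : ContinuousOn f (Set.Icc a b) := hUc.sub continuousOn_id
  have hfa : AntitoneOn f (Set.Icc a b) := fun x hx y hy hxy =>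
    sub_le_sub (hUa hx hy hxy) hxy
  -- fixed point c of ξU via IVT
  have hfa0 : 0 ≤ f a := sub_nonneg.mpr (hUmap a hmemab).1
  have hfb0 : f b ≤ 0 := sub_nonpos.mpr (hUmap b hmembb).2
  obtain ⟨c, hcmem, hfc0⟩ := intermediate_value_Icc' hab hfc ⟨hfb0, hfa0⟩
  have hcfix : ξU c = c := by
    have : ξU c - c = 0 := hfc0
    linarith
  -- g v = ξL (ξU v) - v on [a, c]
  have hsub : Set.Icc a c ⊆ Set.Icc a b := Set.Icc_subset_Icc le_rfl hcmem.2
  have hgc : ContinuousOn (fun v => ξL (ξU v) - v) (Set.Icc a c) :=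
    ((hLc.comp hUc fun v hv => hUmap v hv).sub continuousOn_id).mono hsub
  have hga : 0 ≤ ξL (ξU a) - a := sub_nonneg.mpr (hLmap _ (hUmap a hmemab)).1
  have hgcend : ξL (ξU c) - c ≤ 0 := by
    have h1 : ξL c ≤ ξU c := hLU c hcmem
    rw [hcfix] at *
    linarith
  obtain ⟨p, hpmem, hgp⟩ :=
    intermediate_value_Icc' hcmem.1 hgc ⟨hgcend, hga⟩
  have hpab : p ∈ Set.Icc a b := hsub hpmem
  refine ⟨p, ξU p, hpab, hUmap p hpab, ?_, rfl, by dsimp at hgp; linarith⟩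
  -- p ≤ ξU p since p ≤ c and f antitone with f c = 0
  have := hfa hpab (hsub ⟨hcmem.1, le_refl c⟩) hpmem.2
  have hfc0' : f c = 0 := hfc0
  have : (0:ℝ) ≤ f p := hfc0' ▸ this
  simpa [hf, sub_nonneg] using this
end

section
/- Let a ≤ b be real numbers and let ξ_L, ξ_U : ℝ → ℝ be antitone on [a,b], satisfying ξ_L(v) ≤ ξ_U(v) for every v ∈ [a,b] and mapping [a,b] into [a,b]. Define the WCS recursion p₀ = a, q₀ = b, p_{k+1} = ξ_L(q_k), q_{k+1} = ξ_U(p_k). Let (v_k) be any admissible sequence, i.e. v₀ ∈ [a,b] and ξ_L(v_k) ≤ v_{k+1} ≤ ξ_U(v_k) for every k. Then p_k ≤ v_k ≤ q_k for every k. -/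
/-- The WCS cobwebbing recursion bounds every admissible orbit: if `p₀ = a`,
`q₀ = b`, `p_{k+1} = ξ_L (q_k)`, `q_{k+1} = ξ_U (p_k)` for antitone bound maps
`ξ_L ≤ ξ_U` of `[a,b]` into itself, then any sequence with `v₀ ∈ [a,b]` and
`ξ_L (v_k) ≤ v_{k+1} ≤ ξ_U (v_k)` satisfies `p_k ≤ v_k ≤ q_k` for all `k`. -/
theorem stmt8 (a b : ℝ) (hab : a ≤ b) (ξL ξU : ℝ → ℝ)
    (hLa : AntitoneOn ξL (Set.Icc a b)) (hUa : AntitoneOn ξU (Set.Icc a b))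
    (hLU : ∀ v ∈ Set.Icc a b, ξL v ≤ ξU v)
    (hLmap : ∀ v ∈ Set.Icc a b, ξL v ∈ Set.Icc a b)
    (hUmap : ∀ v ∈ Set.Icc a b, ξU v ∈ Set.Icc a b)
    (p q : ℕ → ℝ) (hp0 : p 0 = a) (hq0 : q 0 = b)
    (hp : ∀ k, p (k + 1) = ξL (q k)) (hq : ∀ k, q (k + 1) = ξU (p k))
    (v : ℕ → ℝ) (hv0 : v 0 ∈ Set.Icc a b)
    (hv : ∀ k, ξL (v k) ≤ v (k + 1) ∧ v (k + 1) ≤ ξU (v k)) :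
    ∀ k : ℕ, p k ≤ v k ∧ v k ≤ q k := by
  have key : ∀ k : ℕ, p k ∈ Set.Icc a b ∧ q k ∈ Set.Icc a b ∧
      p k ≤ v k ∧ v k ≤ q k := by
    intro k
    induction k with
    | zero =>
        refine ⟨?_, ?_, ?_, ?_⟩
        · rw [hp0]; exact ⟨le_refl a, hab⟩
        · rw [hq0]; exact ⟨hab, le_refl b⟩
        · rw [hp0]; exact hv0.1
        · rw [hq0]; exact hv0.2
    | succ k ih =>
        obtain ⟨hpk, hqk, hpv, hvq⟩ := ih
        have hvk : v k ∈ Set.Icc a b := ⟨hpk.1.trans hpv, hvq.trans hqk.2⟩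
        refine ⟨?_, ?_, ?_, ?_⟩
        · rw [hp]; exact hLmap _ hqk
        · rw [hq]; exact hUmap _ hpk
        · rw [hp]; exact le_trans (hLa hvk hqk hvq) (hv k).1
        · rw [hq]; exact le_trans (hv k).2 (hUa hpk hvk hpv)
  exact fun k => ⟨(key k).2.2.1, (key k).2.2.2⟩
end

section
/- Let a ≤ b be real numbers and let ξ_L, ξ_U : ℝ → ℝ be continuous on [a,b] and antitone on [a,b], satisfying ξ_L(v) ≤ ξ_U(v) for every v ∈ [a,b] and mapping [a,b] into [a,b]. Let p* and q* be the limits of the WCS recursion p₀ = a, q₀ = b, p_{k+1} = ξ_L(q_k), q_{k+1} = ξ_U(p_k). Then for every admissible sequence (v_k) (i.e. v₀ ∈ [a,b] and ξ_L(v_k) ≤ v_{k+1} ≤ ξ_U(v_k) for all k) and every ε > 0, there exists K such that for all k ≥ K, p* − ε ≤ v_k ≤ q* + ε; that is, every admissible orbit is eventually confined to any ε-neighborhood of the limiting interval [p*, q*]. -/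
open Filter Topology

/-- Every admissible orbit is eventually confined to any `ε`-neighborhood of the
limiting interval `[p*, q*]` of the WCS cobwebbing recursion: with `p₀ = a`,
`q₀ = b`, `p_{k+1} = ξ_L (q_k)`, `q_{k+1} = ξ_U (p_k)` converging to `p*`, `q*`,
any sequence with `v₀ ∈ [a,b]` and `ξ_L (v_k) ≤ v_{k+1} ≤ ξ_U (v_k)` satisfies,
for every `ε > 0`, `p* - ε ≤ v_k ≤ q* + ε` for all sufficiently large `k`. -/
theorem stmt9 (a b : ℝ) (hab : a ≤ b) (ξL ξU : ℝ → ℝ)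
    (hLc : ContinuousOn ξL (Set.Icc a b)) (hUc : ContinuousOn ξU (Set.Icc a b))
    (hLa : AntitoneOn ξL (Set.Icc a b)) (hUa : AntitoneOn ξU (Set.Icc a b))
    (hLU : ∀ v ∈ Set.Icc a b, ξL v ≤ ξU v)
    (hLmap : ∀ v ∈ Set.Icc a b, ξL v ∈ Set.Icc a b)
    (hUmap : ∀ v ∈ Set.Icc a b, ξU v ∈ Set.Icc a b)
    (p q : ℕ → ℝ) (hp0 : p 0 = a) (hq0 : q 0 = b)
    (hp : ∀ k, p (k + 1) = ξL (q k)) (hq : ∀ k, q (k + 1) = ξU (p k))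
    (pstar qstar : ℝ)
    (hpstar : Tendsto p atTop (𝓝 pstar)) (hqstar : Tendsto q atTop (𝓝 qstar))
    (v : ℕ → ℝ) (hv0 : v 0 ∈ Set.Icc a b)
    (hv : ∀ k, ξL (v k) ≤ v (k + 1) ∧ v (k + 1) ≤ ξU (v k)) :
    ∀ ε > (0 : ℝ), ∃ K : ℕ, ∀ k ≥ K, pstar - ε ≤ v k ∧ v k ≤ qstar + ε := by
  -- all v n stay in [a,b]
  have hvmem : ∀ n, v n ∈ Set.Icc a b := by
    intro n
    induction n with
    | zero => exact hv0
    | succ m ih =>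
      have h1 := (hv m).1
      have h2 := (hv m).2
      have hL := hLmap (v m) ih
      have hU := hUmap (v m) ih
      exact ⟨le_trans hL.1 h1, le_trans h2 hU.2⟩
  -- p k, q k stay in [a,b]
  have hpqmem : ∀ k, p k ∈ Set.Icc a b ∧ q k ∈ Set.Icc a b := by
    intro k
    induction k with
    | zero =>
      rw [hp0, hq0]
      exact ⟨⟨le_refl a, hab⟩, ⟨hab, le_refl b⟩⟩
    | succ m ih =>
      rw [hp m, hq m]
      exact ⟨hLmap _ ih.2, hUmap _ ih.1⟩
  -- key: for n ≥ k, p k ≤ v n ≤ q k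
  have key : ∀ k, ∀ n, k ≤ n → p k ≤ v n ∧ v n ≤ q k := by
    intro k
    induction k with
    | zero =>
      intro n _
      rw [hp0, hq0]
      exact ⟨(hvmem n).1, (hvmem n).2⟩
    | succ m ih =>
      intro n hn
      obtain ⟨l, rfl⟩ : ∃ l, n = l + 1 := ⟨n - 1, by omega⟩
      have hl : m ≤ l := by omega
      have ihl := ih l hl
      have h1 := (hv l).1
      have h2 := (hv l).2
      constructor
      · rw [hp m]
        exact le_trans (hLa (hvmem l) (hpqmem m).2 ihl.2) h1
      · rw [hq m]
        exact le_trans h2 (hUa (hpqmem m).1 (hvmem l) ihl.1)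
  intro ε hε
  have h1 : ∀ᶠ k in atTop, pstar - ε < p k :=
    hpstar.eventually (eventually_gt_nhds (by linarith))
  have h2 : ∀ᶠ k in atTop, q k < qstar + ε :=
    hqstar.eventually (eventually_lt_nhds (by linarith))
  obtain ⟨K, hK⟩ := (h1.and h2).exists_forall_of_atTop
  refine ⟨K, fun k hk => ?_⟩
  obtain ⟨hKp, hKq⟩ := hK K le_rfl
  obtain ⟨hk1, hk2⟩ := key K k hk
  exact ⟨by linarith, by linarith⟩
end
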